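/- arXiv:1411.4459 — 4 statements merged into one kernel-verified Lean document; each statement's English description precedes it below -/
import Mathlib

section
/- Let G be a graph on vertex set V, and for X ⊆ V define the skew discrepancy D_ν(X) = |e(X) − (1/2)·binom(|X|,2)| − ν·|X|^{3/2} for a real ν > 0. Suppose X ⊆ V with |X| = n ≥ 2 attains the maximum of D_ν over all subsets of V, and suppose e(X) > (1/2)·binom(n,2). Then every vertex x ∈ X satisfies deg_{G[X]}(x) ≥ (n−1)/2 + ν·√(n−1). -/
open Finset
open scoped Classical

/-- Number of edges of `G` with both endpoints in `X`, as a real number. -/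
noncomputable def edgesIn {V : Type*} (G : SimpleGraph V) (X : Finset V) : ℝ :=
  (((X ×ˢ X).filter fun p => G.Adj p.1 p.2).card : ℝ) / 2

/-- Discrepancy `D(X) = e(X) - (1/2) * binom(|X|, 2)`. -/
noncomputable def disc {V : Type*} (G : SimpleGraph V) (X : Finset V) : ℝ :=
  edgesIn G X - (X.card.choose 2 : ℝ) / 2

/-- Skew discrepancy `D_ν(X) = |D(X)| - ν * |X|^{3/2}`. -/
noncomputable def skewDisc {V : Type*} (G : SimpleGraph V) (ν : ℝ) (X : Finset V) : ℝ :=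
  |disc G X| - ν * (X.card : ℝ) ^ ((3 : ℝ) / 2)

/-!
Deleting a vertex `x` from `X` changes the discrepancy `D` by `deg_X(x) - (n - 1)/2`, while the
penalty `ν |X|^{3/2}` drops by at least `ν √(n - 1)`, since `n^{3/2} - (n-1)^{3/2} ≥ √(n - 1)`.
As `D(X) > 0`, maximality of `D_ν` at `X` compared with `X \ {x}` gives the degree bound.
-/

namespace SimpleGraph

variable {V : Type*} (G : SimpleGraph V)

lemma edgesIn_eq_sum_sum (X : Finset V) :
    edgesIn G X = (∑ a ∈ X, ∑ b ∈ X, if G.Adj a b then (1 : ℝ) else 0) / 2 := by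
  rw [edgesIn, card_filter, sum_product]
  push_cast
  rfl

lemma edgesIn_eq_edgesIn_erase_add {X : Finset V} {x : V} (hx : x ∈ X) :
    edgesIn G X = edgesIn G (X.erase x) + ((X.filter fun y => G.Adj x y).card : ℝ) := by
  set f : V → V → ℝ := fun a b => if G.Adj a b then 1 else 0
  have hdeg : ((X.filter fun y => G.Adj x y).card : ℝ) = ∑ b ∈ X.erase x, f x b := by
    rw [← sum_boole, ← add_sum_erase _ _ hx]
    simp [f]
  have hsplit : ∑ a ∈ X, ∑ b ∈ X, f a b
      = (f x x + ∑ b ∈ X.erase x, f x b) + ∑ a ∈ X.erase x, (f a x + ∑ b ∈ X.erase x, f a b) := by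
    simp_rw [add_sum_erase _ _ hx]
    exact (add_sum_erase _ _ hx).symm
  rw [edgesIn_eq_sum_sum, edgesIn_eq_sum_sum, hdeg]
  change (∑ a ∈ X, ∑ b ∈ X, f a b) / 2 = (∑ a ∈ X.erase x, ∑ b ∈ X.erase x, f a b) / 2 + _
  rw [hsplit, sum_add_distrib]
  simp only [f, G.adj_comm _ x, G.irrefl, if_false]
  ring

lemma disc_sub_disc_erase {X : Finset V} {x : V} (hx : x ∈ X) :
    disc G X - disc G (X.erase x)
      = ((X.filter fun y => G.Adj x y).card : ℝ) - ((X.card : ℝ) - 1) / 2 := by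
  have hcard : ((X.erase x).card : ℝ) = X.card - 1 := by
    rw [card_erase_of_mem hx, Nat.cast_pred (card_pos.mpr ⟨x, hx⟩)]
  rw [disc, disc, Nat.cast_choose_two, Nat.cast_choose_two, hcard,
    G.edgesIn_eq_edgesIn_erase_add hx]
  ring

lemma disc_sub_le_of_skewDisc_le {ν : ℝ} {X Y : Finset V} (hXY : skewDisc G ν Y ≤ skewDisc G ν X)
    (hX : 0 ≤ disc G X) :
    ν * ((X.card : ℝ) ^ ((3 : ℝ) / 2) - (Y.card : ℝ) ^ ((3 : ℝ) / 2)) ≤ disc G X - disc G Y := by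
  rw [skewDisc, skewDisc, abs_of_nonneg hX] at hXY
  linarith [le_abs_self (disc G Y)]

end SimpleGraph

lemma Real.rpow_three_halves {t : ℝ} (ht : 0 ≤ t) : t ^ ((3 : ℝ) / 2) = t * √t := by
  rw [Real.sqrt_eq_rpow, ← Real.rpow_one_add' ht (by norm_num)]
  norm_num

lemma Real.sqrt_sub_one_le_rpow_three_halves_sub {t : ℝ} (ht : 1 ≤ t) :
    √(t - 1) ≤ t ^ ((3 : ℝ) / 2) - (t - 1) ^ ((3 : ℝ) / 2) := by
  rw [Real.rpow_three_halves (by linarith), Real.rpow_three_halves (by linarith)]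
  nlinarith [Real.sqrt_le_sqrt (show t - 1 ≤ t by linarith)]

theorem stmt_3_general {V : Type*} (G : SimpleGraph V) (ν : ℝ) (hν : 0 < ν)
    (X : Finset V) (n : ℕ) (hX : X.card = n)
    (hmax : ∀ Y : Finset V, skewDisc G ν Y ≤ skewDisc G ν X)
    (hpos : ((n.choose 2 : ℝ)) / 2 < edgesIn G X) :
    ∀ x ∈ X, ((n : ℝ) - 1) / 2 + ν * Real.sqrt ((n : ℝ) - 1)
      ≤ ((X.filter fun y => G.Adj x y).card : ℝ) := by
  intro x hx
  have hdisc : 0 ≤ disc G X := by rw [disc, hX]; linarith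
  have hgain := G.disc_sub_le_of_skewDisc_le (hmax (X.erase x)) hdisc
  rw [G.disc_sub_disc_erase hx, card_erase_of_mem hx, hX,
    Nat.cast_pred (hX ▸ card_pos.mpr ⟨x, hx⟩)] at hgain
  have hn : (1 : ℝ) ≤ n := by exact_mod_cast hX ▸ card_pos.mpr ⟨x, hx⟩
  have hpenalty := mul_le_mul_of_nonneg_left (Real.sqrt_sub_one_le_rpow_three_halves_sub hn) hν.le
  linarith

theorem stmt_3 {V : Type*} [Fintype V] (G : SimpleGraph V) (ν : ℝ) (hν : 0 < ν)
    (X : Finset V) (n : ℕ) (hX : X.card = n) (hn : 2 ≤ n)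
    (hmax : ∀ Y : Finset V, skewDisc G ν Y ≤ skewDisc G ν X)
    (hpos : ((n.choose 2 : ℝ)) / 2 < edgesIn G X) :
    ∀ x ∈ X, ((n : ℝ) - 1) / 2 + ν * Real.sqrt ((n : ℝ) - 1)
      ≤ ((X.filter fun y => G.Adj x y).card : ℝ) :=
  stmt_3_general G ν hν X n hX hmax hpos
end

section
/- Let A₁, …, A_n ⊆ [n] and p ∈ [0,1]. Assume Spencer's theorem: for every family of n subsets of an n-element ground set and every restriction to a subset X of the ground set, there is a ±1-colouring χ of X with |χ(A_i ∩ X)| ≤ 6√n for all i. Then there exists Y ⊆ [n] such that for every i, ||A_i ∩ Y| − p·|A_i|| ≤ 6√n. -/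
open Finset Filter Topology

/-!
Lovász–Spencer–Vesztergombi rounding. If `c` has dyadic coordinates `m j / 2 ^ k`, colour the
coordinates with odd numerator by `±1` with discrepancy at most `D` and round each of them up or
down according to its colour: this lowers the exponent `k` by one at the cost of `D / 2 ^ k` per
set, so by induction some set `Y` is within `D (1 - 2⁻ᵏ)` of `c` on every `A i`. A general
`c ∈ [0,1]^α` is within `2⁻ᵏ` per coordinate of a dyadic vector, and since there are only finitely
many candidate sets `Y`, one of them works for infinitely many `k`, which gives the error bound `D`.
-/

/-- `herdisc A ≤ D` in the usual notation. -/
def HerDiscLE {ι α : Type*} [DecidableEq α] (A : ι → Finset α) (D : ℝ) : Prop :=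
  ∀ X : Finset α, ∃ χ : α → ℝ, (∀ j, χ j = 1 ∨ χ j = -1) ∧ ∀ i, |∑ j ∈ A i ∩ X, χ j| ≤ D

lemma exists_two_mul_eq_add_ite_odd {m N : ℕ} (hm : m ≤ 2 * N) {s : ℝ} (hs : s = 1 ∨ s = -1) :
    ∃ m' ≤ N, 2 * (m' : ℝ) = m + if Odd m then s else 0 := by
  rcases Nat.even_or_odd' m with ⟨t, rfl | rfl⟩
  · exact ⟨t, by omega, by simp [Nat.not_odd_iff_even.mpr (even_two_mul t)]⟩
  · rcases hs with rfl | rfl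
    · exact ⟨t + 1, by omega, by push_cast [odd_two_mul_add_one t]; ring⟩
    · exact ⟨t, by omega, by push_cast [odd_two_mul_add_one t]; ring⟩

lemma abs_natFloor_mul_div_sub_le {x t : ℝ} (hx : 0 ≤ x) (ht : 0 < t) :
    |(⌊x * t⌋₊ : ℝ) / t - x| ≤ t⁻¹ := by
  have hle : (⌊x * t⌋₊ : ℝ) ≤ x * t := Nat.floor_le (by positivity)
  have hlt : x * t < ⌊x * t⌋₊ + 1 := Nat.lt_floor_add_one _
  rw [abs_sub_comm, abs_of_nonneg (by rw [sub_nonneg, div_le_iff₀ ht]; exact hle),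
    sub_le_iff_le_add, ← one_div, ← add_div, le_div_iff₀ ht]
  linarith

section
variable {ι α : Type*} [Fintype α] [DecidableEq α] {A : ι → Finset α} {D : ℝ}

lemma HerDiscLE.exists_abs_card_inter_sub_sum_div_two_pow_le (hA : HerDiscLE A D) (k : ℕ)
    (m : α → ℕ) (hm : ∀ j, m j ≤ 2 ^ k) : ∃ Y : Finset α, ∀ i,
      |(#(A i ∩ Y) : ℝ) - ∑ j ∈ A i, (m j : ℝ) / 2 ^ k| ≤ D * (1 - 2⁻¹ ^ k) := by
  induction k generalizing m with
  | zero =>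
    refine ⟨({j | m j = 1} : Finset α), fun i => ?_⟩
    have hcard : (#(A i ∩ ({j | m j = 1} : Finset α)) : ℝ) = ∑ j ∈ A i, (m j : ℝ) := by
      rw [inter_filter, inter_univ, natCast_card_filter]
      refine sum_congr rfl fun j _ => ?_
      have hj : m j ≤ 1 := hm j
      interval_cases m j <;> simp
    simp [hcard]
  | succ k ih =>
    obtain ⟨χ, hχ, hdisc⟩ := hA ({j | Odd (m j)} : Finset α)
    choose m' hm' hm'_eq using fun j =>
      exists_two_mul_eq_add_ite_odd (pow_succ' 2 k ▸ hm j) (hχ j)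
    obtain ⟨Y, hY⟩ := ih m' hm'
    refine ⟨Y, fun i => ?_⟩
    set e := ∑ j ∈ A i ∩ ({j | Odd (m j)} : Finset α), χ j with he
    rw [inter_filter, inter_univ, sum_filter] at he
    have hsplit : ∑ j ∈ A i, (m' j : ℝ) / 2 ^ k =
        ∑ j ∈ A i, (m j : ℝ) / 2 ^ (k + 1) + e / 2 ^ (k + 1) := calc
      _ = ∑ j ∈ A i, 2 * (m' j : ℝ) / 2 ^ (k + 1) :=
          sum_congr rfl fun j _ => by rw [pow_succ']; field_simp
      _ = _ := by simp only [hm'_eq, add_div, sum_add_distrib, he, sum_div]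
    calc |(#(A i ∩ Y) : ℝ) - ∑ j ∈ A i, (m j : ℝ) / 2 ^ (k + 1)|
        = |((#(A i ∩ Y) : ℝ) - ∑ j ∈ A i, (m' j : ℝ) / 2 ^ k) + e / 2 ^ (k + 1)| := by
          rw [hsplit]; congr 1; ring
      _ ≤ D * (1 - 2⁻¹ ^ k) + D * 2⁻¹ ^ (k + 1) := by
          refine (abs_add_le _ _).trans (add_le_add (hY i) ?_)
          rw [abs_div, abs_of_pos (by positivity : (0 : ℝ) < 2 ^ (k + 1)), inv_pow,
            ← div_eq_mul_inv]
          exact div_le_div_of_nonneg_right (hdisc i) (by positivity)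
      _ = D * (1 - 2⁻¹ ^ (k + 1)) := by ring

lemma HerDiscLE.exists_abs_card_inter_sub_sum_le_add (hA : HerDiscLE A D) {c : α → ℝ}
    (hc0 : ∀ j, 0 ≤ c j) (hc1 : ∀ j, c j ≤ 1) (k : ℕ) : ∃ Y : Finset α, ∀ i,
      |(#(A i ∩ Y) : ℝ) - ∑ j ∈ A i, c j| ≤ D * (1 - 2⁻¹ ^ k) + #(A i) * 2⁻¹ ^ k := by
  have hfloor : ∀ j, ⌊c j * 2 ^ k⌋₊ ≤ 2 ^ k := fun j =>
    Nat.floor_le_of_le (by exact_mod_cast mul_le_of_le_one_left (by positivity) (hc1 j))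
  obtain ⟨Y, hY⟩ := hA.exists_abs_card_inter_sub_sum_div_two_pow_le k _ hfloor
  refine ⟨Y, fun i => ?_⟩
  have hround : |∑ j ∈ A i, (⌊c j * 2 ^ k⌋₊ : ℝ) / 2 ^ k - ∑ j ∈ A i, c j| ≤
      #(A i) * 2⁻¹ ^ k := calc
    _ ≤ ∑ j ∈ A i, |(⌊c j * 2 ^ k⌋₊ : ℝ) / 2 ^ k - c j| := by
        rw [← sum_sub_distrib]; exact abs_sum_le_sum_abs _ _
    _ ≤ ∑ j ∈ A i, ((2 : ℝ) ^ k)⁻¹ :=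
        sum_le_sum fun j _ => abs_natFloor_mul_div_sub_le (hc0 j) (by positivity)
    _ = _ := by rw [sum_const, nsmul_eq_mul, inv_pow]
  exact (abs_sub_le _ _ _).trans (add_le_add (hY i) hround)

lemma HerDiscLE.exists_abs_card_inter_sub_sum_le (hA : HerDiscLE A D) {c : α → ℝ}
    (hc0 : ∀ j, 0 ≤ c j) (hc1 : ∀ j, c j ≤ 1) :
    ∃ Y : Finset α, ∀ i, |(#(A i ∩ Y) : ℝ) - ∑ j ∈ A i, c j| ≤ D := by
  obtain ⟨Y, hY⟩ := frequently_exists.mp <|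
    Frequently.of_forall (f := atTop) (hA.exists_abs_card_inter_sub_sum_le_add hc0 hc1)
  refine ⟨Y, fun i => ge_of_tendsto_of_frequently ?_ (hY.mono fun k hk => hk i)⟩
  have h : Tendsto (fun k : ℕ => (2⁻¹ : ℝ) ^ k) atTop (𝓝 0) :=
    tendsto_pow_atTop_nhds_zero_of_lt_one (by norm_num) (by norm_num)
  simpa using ((h.const_sub 1).const_mul D).add (h.const_mul (#(A i) : ℝ))

end

theorem stmt_6 (n : ℕ) (A : Fin n → Finset (Fin n)) (p : ℝ) (hp0 : 0 ≤ p) (hp1 : p ≤ 1)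
    (spencer : ∀ (B : Fin n → Finset (Fin n)) (X : Finset (Fin n)),
      ∃ χ : Fin n → ℝ, (∀ j, χ j = 1 ∨ χ j = -1) ∧
        ∀ i, |∑ j ∈ B i ∩ X, χ j| ≤ 6 * Real.sqrt n) :
    ∃ Y : Finset (Fin n), ∀ i,
      |((A i ∩ Y).card : ℝ) - p * ((A i).card : ℝ)| ≤ 6 * Real.sqrt n := by
  obtain ⟨Y, hY⟩ := HerDiscLE.exists_abs_card_inter_sub_sum_le (spencer A)
    (c := fun _ => p) (fun _ => hp0) (fun _ => hp1)
  refine ⟨Y, fun i => ?_⟩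
  simpa [mul_comm p] using hY i
end

section
/- Suppose G = (V,E) is a graph with ℓ = P·k vertices for some real P > 1 and positive integer k, and suppose δ(G) ≥ ℓ/2 + η·√ℓ for some η > 0. Assume the discrepancy lemma: for any sets A₀,…,A_{ℓ−1} ⊆ V and any p ∈ [0,1] there exists Y ⊆ V with ||A_i ∩ Y| − p|A_i|| ≤ 6√ℓ for all i. Then G has an induced subgraph H on exactly k vertices with δ(H) ≥ k/2 + (η/√P − 19√P)·√k. -/
/-!
Apply the discrepancy lemma with `p = k / ℓ` to the neighbourhoods of all vertices but one, `w`,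
using the slot of `w` for the whole vertex set. The resulting `Y` has about `k` elements and meets
every neighbourhood `N(v)`, `v ≠ w`, in at least `p · deg v - 6√ℓ ≥ k/2 + (η/√P)√k - 6√ℓ`
vertices. Trimming `Y \ {w}` to `k` vertices, or padding it with vertices other than `w`, changes
these intersections by at most `6√ℓ + 1 ≤ 13 √P √k`.
-/

open Finset
open scoped Classical

lemma exists_subset_card_eq_card_inter_le {α : Type*} {Y U : Finset α} {k : ℕ} (hkU : k ≤ #U)
    {d : ℝ} (hd : 0 ≤ d) (hY : (#Y : ℝ) ≤ k + d) :
    ∃ S ⊆ U, #S = k ∧ ∀ B : Finset α, (#(B ∩ Y) : ℝ) ≤ #(B ∩ S) + d + #(Y \ U) := by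
  by_cases hk : k ≤ #(Y ∩ U)
  · obtain ⟨S, hSYU, hS⟩ := exists_subset_card_eq hk
    have hSY : S ⊆ Y := hSYU.trans inter_subset_left
    refine ⟨S, hSYU.trans inter_subset_right, hS, fun B => ?_⟩
    have hcover : B ∩ Y ⊆ B ∩ S ∪ Y \ S := fun y hy => by
      by_cases hyS : y ∈ S <;> simp_all
    have hcount : #(B ∩ Y) ≤ #(B ∩ S) + (#Y - k) :=
      hS ▸ card_sdiff_of_subset hSY ▸ (card_le_card hcover).trans (card_union_le _ _)
    have hYk : ((#Y - k : ℕ) : ℝ) ≤ d := by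
      rw [Nat.cast_sub (hS ▸ card_le_card hSY)]; linarith
    have : (#(B ∩ Y) : ℝ) ≤ #(B ∩ S) + ((#Y - k : ℕ) : ℝ) := by exact_mod_cast hcount
    linarith [(#(Y \ U)).cast_nonneg (α := ℝ)]
  · obtain ⟨S, hYUS, hSU, hS⟩ :=
      exists_subsuperset_card_eq inter_subset_right (not_le.mp hk).le hkU
    refine ⟨S, hSU, hS, fun B => ?_⟩
    have hcover : B ∩ Y ⊆ B ∩ S ∪ Y \ U := fun y hy => by
      by_cases hyU : y ∈ U
      · simp_all [hYUS (mem_inter.mpr ⟨(mem_inter.mp hy).2, hyU⟩)]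
      · simp_all
    have : (#(B ∩ Y) : ℝ) ≤ #(B ∩ S) + #(Y \ U) := by
      exact_mod_cast (card_le_card hcover).trans (card_union_le _ _)
    linarith

lemma exists_card_and_inter_near_of_discrepancy {V : Type*} [Fintype V] {ℓ : ℕ}
    (hcard : Fintype.card V = ℓ) {c : ℝ}
    (disc : ∀ (A : Fin ℓ → Finset V) (p : ℝ), 0 ≤ p → p ≤ 1 →
      ∃ Y : Finset V, ∀ i, |((A i ∩ Y).card : ℝ) - p * ((A i).card : ℝ)| ≤ c)
    {p : ℝ} (hp₀ : 0 ≤ p) (hp₁ : p ≤ 1) (w : V) (B : V → Finset V) :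
    ∃ Y : Finset V, |(#Y : ℝ) - p * ℓ| ≤ c ∧
      ∀ v, v ≠ w → |(#(B v ∩ Y) : ℝ) - p * #(B v)| ≤ c := by
  let e : Fin ℓ ≃ V := (Fintype.equivFinOfCardEq hcard).symm
  obtain ⟨Y, hY⟩ := disc (fun i => if e i = w then univ else B (e i)) p hp₀ hp₁
  refine ⟨Y, ?_, fun v hv => ?_⟩
  · simpa [e, hcard] using hY (e.symm w)
  · simpa [e, hv] using hY (e.symm v)

lemma half_add_le_scaled_min_degree_sub {ℓ k P η : ℝ} (hk : 0 < k) (hP : 0 < P)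
    (hℓ : ℓ = P * k) (hℓ₁ : 1 ≤ ℓ) :
    k / 2 + (η / √P - 19 * √P) * √k ≤ k / ℓ * (ℓ / 2 + η * √ℓ) - 12 * √ℓ - 1 := by
  have hsqrt : √ℓ = √P * √k := by rw [hℓ, Real.sqrt_mul hP.le]
  have hsqrtP : 0 < √P := Real.sqrt_pos.mpr hP
  have hdeg : k / ℓ * (ℓ / 2 + η * √ℓ) = k / 2 + η / √P * √k := by
    have hp : k / ℓ = (√P * √P)⁻¹ := by
      rw [Real.mul_self_sqrt hP.le, hℓ]; field_simp
    rw [hp, hsqrt, hℓ]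
    field_simp
    linear_combination -k * Real.mul_self_sqrt hP.le
  have h1 : 1 ≤ √ℓ := Real.one_le_sqrt.mpr hℓ₁
  rw [hdeg]
  nlinarith [hsqrt]

theorem stmt_7_general {V : Type*} [Fintype V] (G : SimpleGraph V) (ℓ k : ℕ) (P η : ℝ)
    (hk : 0 < k) (hP : 1 < P) (hcard : Fintype.card V = ℓ) (hℓ : (ℓ : ℝ) = P * k)
    (hδ : ∀ v : V, (ℓ : ℝ) / 2 + η * Real.sqrt ℓ ≤ (G.degree v : ℝ))
    (discLem : ∀ (A : Fin ℓ → Finset V) (p : ℝ), 0 ≤ p → p ≤ 1 →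
      ∃ Y : Finset V, ∀ i,
        |((A i ∩ Y).card : ℝ) - p * ((A i).card : ℝ)| ≤ 6 * Real.sqrt ℓ) :
    ∃ S : Finset V, S.card = k ∧
      ∀ x ∈ S, (k : ℝ) / 2 + (η / Real.sqrt P - 19 * Real.sqrt P) * Real.sqrt k
        ≤ ((S.filter fun y => G.Adj x y).card : ℝ) := by
  have hkℓ : (k : ℝ) < ℓ := by rw [hℓ]; nlinarith [(Nat.cast_pos (α := ℝ)).mpr hk]
  have hkℓ' : k < ℓ := by exact_mod_cast hkℓ
  obtain ⟨w⟩ : Nonempty V := Fintype.card_pos_iff.mp (by omega)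
  have hp₀ : (0 : ℝ) ≤ k / ℓ := by positivity
  have hp₁ : (k : ℝ) / ℓ ≤ 1 := div_le_one_of_le₀ hkℓ.le (by positivity)
  obtain ⟨Y, hYcard, hYdeg⟩ :=
    exists_card_and_inter_near_of_discrepancy hcard discLem hp₀ hp₁ w
      (fun v => G.neighborFinset v)
  have hkU : k ≤ #(univ.erase w) := by rw [card_erase_of_mem (mem_univ w), card_univ]; omega
  have hpℓ : (k : ℝ) / ℓ * ℓ = k := div_mul_cancel₀ _ (by linarith)
  obtain ⟨S, hSU, hS, hSY⟩ := exists_subset_card_eq_card_inter_le hkU (by positivity)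
    (by linarith [(abs_le.mp hYcard).2] : (#Y : ℝ) ≤ k + 6 * √ℓ)
  refine ⟨S, hS, fun x hx => ?_⟩
  have hxw : x ≠ w := ne_of_mem_erase (hSU hx)
  have hYU : (#(Y \ univ.erase w) : ℝ) ≤ 1 := by
    exact_mod_cast (card_le_card fun y hy => by simp_all).trans (card_singleton w).le
  have hNx := (abs_le.mp (hYdeg x hxw)).1
  rw [G.card_neighborFinset_eq_degree] at hNx
  have hdeg := mul_le_mul_of_nonneg_left (hδ x) hp₀
  have hfilter : S.filter (G.Adj x) = G.neighborFinset x ∩ S := by ext; simp [and_comm]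
  rw [hfilter]
  linarith [hSY (G.neighborFinset x), half_add_le_scaled_min_degree_sub (η := η)
    (Nat.cast_pos.mpr hk) (by linarith) hℓ (Nat.one_le_cast.mpr (hk.trans hkℓ'))]

theorem stmt_7 {V : Type*} [Fintype V] (G : SimpleGraph V) (ℓ k : ℕ) (P η : ℝ)
    (hk : 0 < k) (hP : 1 < P) (hcard : Fintype.card V = ℓ) (hℓ : (ℓ : ℝ) = P * k)
    (hη : 0 < η)
    (hδ : ∀ v : V, (ℓ : ℝ) / 2 + η * Real.sqrt ℓ ≤ (G.degree v : ℝ))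
    (discLem : ∀ (A : Fin ℓ → Finset V) (p : ℝ), 0 ≤ p → p ≤ 1 →
      ∃ Y : Finset V, ∀ i,
        |((A i ∩ Y).card : ℝ) - p * ((A i).card : ℝ)| ≤ 6 * Real.sqrt ℓ) :
    ∃ S : Finset V, S.card = k ∧
      ∀ x ∈ S, (k : ℝ) / 2 + (η / Real.sqrt P - 19 * Real.sqrt P) * Real.sqrt k
        ≤ ((S.filter fun y => G.Adj x y).card : ℝ) :=
  stmt_7_general G ℓ k P η hk hP hcard hℓ hδ discLem
end

section
/- Let G be a graph on vertex set V and ν > 0, with D, D_ν as usual. Suppose X₀, X₁, X₂, X₃ are pairwise disjoint subsets of V such that D_ν maximality holds in the nested sense: D_ν(S) ≤ D_ν(X₀) for every S ⊆ X₀ ∪ X₁ ∪ X₂ ∪ X₃, and for each 1 ≤ j ≤ 3, D_ν(S) ≤ D_ν(X_j) for every S ⊆ X_j ∪ … ∪ X₃; assume also D(X_j) > 0 for all j. Then 3·D(X₃) ≤ 2·D(X₀) + 8·ν·|X₀ ∪ X₁ ∪ X₂ ∪ X₃|^{3/2}. -/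
open Finset
open scoped Classical

noncomputable def crossE {V : Type*} (G : SimpleGraph V) (A B : Finset V) : ℝ :=
  (((A ×ˢ B).filter fun p => G.Adj p.1 p.2).card : ℝ)

noncomputable def relDisc {V : Type*} (G : SimpleGraph V) (A B : Finset V) : ℝ :=
  crossE G A B - (A.card : ℝ) * (B.card : ℝ) / 2

lemma crossE_comm {V : Type*} (G : SimpleGraph V) (A B : Finset V) :
    crossE G A B = crossE G B A := by
  unfold crossE
  congr 1
  apply Finset.card_bij (fun p _ => (p.2, p.1))
  · rintro ⟨a, b⟩ h
    simp only [mem_filter, mem_product] at h ⊢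
    exact ⟨⟨h.1.2, h.1.1⟩, h.2.symm⟩
  · rintro ⟨a, b⟩ _ ⟨c, d⟩ _ h
    simpa [Prod.ext_iff, and_comm] using h
  · rintro ⟨a, b⟩ h
    simp only [mem_filter, mem_product] at h
    exact ⟨(b, a), by simp [mem_filter, mem_product, h.1.1, h.1.2, h.2.symm]⟩

lemma crossE_union_left {V : Type*} (G : SimpleGraph V) {A B : Finset V} (C : Finset V)
    (h : Disjoint A B) : crossE G (A ∪ B) C = crossE G A C + crossE G B C := by
  unfold crossE
  rw [Finset.union_product, Finset.filter_union]
  rw [Finset.card_union_of_disjoint]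
  · push_cast; ring
  · exact Finset.disjoint_filter_filter (by
      rw [Finset.disjoint_left]
      rintro ⟨a, b⟩ ha hb
      rw [Finset.mem_product] at ha hb
      exact (Finset.disjoint_left.mp h ha.1) hb.1)

lemma crossE_union_right {V : Type*} (G : SimpleGraph V) (A : Finset V) {B C : Finset V}
    (h : Disjoint B C) : crossE G A (B ∪ C) = crossE G A B + crossE G A C := by
  rw [crossE_comm, crossE_union_left G A h, crossE_comm G B A, crossE_comm G C A]

lemma edgesIn_eq (V : Type*) (G : SimpleGraph V) (X : Finset V) :
    edgesIn G X = crossE G X X / 2 := rfl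

lemma disc_union {V : Type*} (G : SimpleGraph V) {A B : Finset V} (h : Disjoint A B) :
    disc G (A ∪ B) = disc G A + disc G B + relDisc G A B := by
  unfold disc relDisc
  rw [edgesIn_eq, edgesIn_eq, edgesIn_eq, crossE_union_left G _ h,
    crossE_union_right G A h, crossE_union_right G B h, crossE_comm G B A,
    Finset.card_union_of_disjoint h, Nat.cast_choose_two, Nat.cast_choose_two,
    Nat.cast_choose_two]
  push_cast
  ring

lemma relDisc_union_left {V : Type*} (G : SimpleGraph V) {A B : Finset V} (C : Finset V)
    (h : Disjoint A B) : relDisc G (A ∪ B) C = relDisc G A C + relDisc G B C := by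
  unfold relDisc
  rw [crossE_union_left G C h, Finset.card_union_of_disjoint h]
  push_cast
  ring


lemma abs_disc_le {V : Type*} (G : SimpleGraph V) {ν : ℝ} (hν : 0 < ν) {S X : Finset V}
    {n : ℕ} (hm : skewDisc G ν S ≤ skewDisc G ν X) (hpos : 0 < disc G X)
    (hS : S.card ≤ n) : |disc G S| ≤ disc G X + ν * (n : ℝ) ^ ((3 : ℝ) / 2) := by
  have h1 : (S.card : ℝ) ^ ((3 : ℝ) / 2) ≤ (n : ℝ) ^ ((3 : ℝ) / 2) :=
    Real.rpow_le_rpow (by positivity) (by exact_mod_cast hS) (by norm_num)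
  have h2 : (0 : ℝ) ≤ (X.card : ℝ) ^ ((3 : ℝ) / 2) := Real.rpow_nonneg (by positivity) _
  unfold skewDisc at hm
  have habs : |disc G X| = disc G X := abs_of_pos hpos
  have h3 := mul_le_mul_of_nonneg_left h1 hν.le
  have h4 := mul_nonneg hν.le h2
  linarith

lemma relDisc_bound {V : Type*} (G : SimpleGraph V) {ν : ℝ} (hν : 0 < ν)
    {A B : Finset V} {n : ℕ} (hd : Disjoint A B)
    (hm : skewDisc G ν (A ∪ B) ≤ skewDisc G ν A)
    (hposA : 0 < disc G A) (hcard : (A ∪ B).card ≤ n) :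
    relDisc G A B ≤ ν * (n : ℝ) ^ ((3 : ℝ) / 2) - disc G B := by
  have h1 := abs_disc_le G hν hm hposA hcard
  have h2 := disc_union G hd
  have h3 := le_abs_self (disc G (A ∪ B))
  linarith


theorem stmt_11 {V : Type*} [Fintype V] (G : SimpleGraph V) (ν : ℝ) (hν : 0 < ν)
    (X0 X1 X2 X3 : Finset V)
    (h01 : Disjoint X0 X1) (h02 : Disjoint X0 X2) (h03 : Disjoint X0 X3)
    (h12 : Disjoint X1 X2) (h13 : Disjoint X1 X3) (h23 : Disjoint X2 X3)
    (hmax0 : ∀ S ⊆ X0 ∪ X1 ∪ X2 ∪ X3, skewDisc G ν S ≤ skewDisc G ν X0)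
    (hmax1 : ∀ S ⊆ X1 ∪ X2 ∪ X3, skewDisc G ν S ≤ skewDisc G ν X1)
    (hmax2 : ∀ S ⊆ X2 ∪ X3, skewDisc G ν S ≤ skewDisc G ν X2)
    (hmax3 : ∀ S ⊆ X3, skewDisc G ν S ≤ skewDisc G ν X3)
    (hpos0 : 0 < disc G X0) (hpos1 : 0 < disc G X1)
    (hpos2 : 0 < disc G X2) (hpos3 : 0 < disc G X3) :
    3 * disc G X3 ≤ 2 * disc G X0
      + 8 * ν * (((X0 ∪ X1 ∪ X2 ∪ X3).card : ℝ)) ^ ((3 : ℝ) / 2) := by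

  set U : Finset V := X0 ∪ X1 ∪ X2 ∪ X3 with hU
  set n : ℕ := U.card with hn
  set t : ℝ := ν * (n : ℝ) ^ ((3 : ℝ) / 2) with ht
  -- subset facts
  have s01 : X0 ∪ X1 ⊆ U := by intro x hx; simp only [hU, mem_union] at hx ⊢; tauto
  have s02 : X0 ∪ X2 ⊆ U := by intro x hx; simp only [hU, mem_union] at hx ⊢; tauto
  have s03 : X0 ∪ X3 ⊆ U := by intro x hx; simp only [hU, mem_union] at hx ⊢; tauto
  have s12 : X1 ∪ X2 ⊆ X1 ∪ X2 ∪ X3 := by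
    intro x hx; simp only [mem_union] at hx ⊢; tauto
  have s13 : X1 ∪ X3 ⊆ X1 ∪ X2 ∪ X3 := by
    intro x hx; simp only [mem_union] at hx ⊢; tauto
  have s12' : X1 ∪ X2 ∪ X3 ⊆ U := by intro x hx; simp only [hU, mem_union] at hx ⊢; tauto
  have s23' : X2 ∪ X3 ⊆ U := by intro x hx; simp only [hU, mem_union] at hx ⊢; tauto
  -- pairwise relative discrepancy bounds
  have b01 : relDisc G X0 X1 ≤ t - disc G X1 :=
    relDisc_bound G hν h01 (hmax0 _ s01) hpos0 (card_le_card s01)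
  have b02 : relDisc G X0 X2 ≤ t - disc G X2 :=
    relDisc_bound G hν h02 (hmax0 _ s02) hpos0 (card_le_card s02)
  have b03 : relDisc G X0 X3 ≤ t - disc G X3 :=
    relDisc_bound G hν h03 (hmax0 _ s03) hpos0 (card_le_card s03)
  have b12 : relDisc G X1 X2 ≤ t - disc G X2 :=
    relDisc_bound G hν h12 (hmax1 _ s12) hpos1 (card_le_card (s12.trans s12'))
  have b13 : relDisc G X1 X3 ≤ t - disc G X3 :=
    relDisc_bound G hν h13 (hmax1 _ s13) hpos1 (card_le_card (s13.trans s12'))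
  have b23 : relDisc G X2 X3 ≤ t - disc G X3 :=
    relDisc_bound G hν h23 (hmax2 _ Finset.Subset.rfl) hpos2 (card_le_card s23')
  -- bound on |D(U)|
  have hUabs : |disc G U| ≤ disc G X0 + t :=
    abs_disc_le G hν (hmax0 U Finset.Subset.rfl) hpos0 le_rfl
  have hUlow : -(disc G X0 + t) ≤ disc G U := by
    have := neg_abs_le (disc G U); linarith
  -- D(X3) ≤ D(X2) + t
  have hc : disc G X3 ≤ disc G X2 + t := by
    have h := abs_disc_le G hν (hmax2 X3 Finset.subset_union_right) hpos2
      (card_le_card (Finset.subset_union_right.trans s23'))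
    have := le_abs_self (disc G X3); linarith
  -- decompose disc U
  have d012 : Disjoint (X0 ∪ X1) X2 := Finset.disjoint_union_left.mpr ⟨h02, h12⟩
  have d0123 : Disjoint (X0 ∪ X1 ∪ X2) X3 :=
    Finset.disjoint_union_left.mpr ⟨Finset.disjoint_union_left.mpr ⟨h03, h13⟩, h23⟩
  have e1 : disc G (X0 ∪ X1) = disc G X0 + disc G X1 + relDisc G X0 X1 := disc_union G h01
  have e2 : disc G (X0 ∪ X1 ∪ X2)
      = disc G (X0 ∪ X1) + disc G X2 + relDisc G (X0 ∪ X1) X2 := disc_union G d012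
  have e2' : relDisc G (X0 ∪ X1) X2 = relDisc G X0 X2 + relDisc G X1 X2 :=
    relDisc_union_left G X2 h01
  have e3 : disc G U = disc G (X0 ∪ X1 ∪ X2) + disc G X3 + relDisc G (X0 ∪ X1 ∪ X2) X3 :=
    disc_union G d0123
  have e3' : relDisc G (X0 ∪ X1 ∪ X2) X3
      = relDisc G X0 X3 + relDisc G X1 X3 + relDisc G X2 X3 := by
    rw [relDisc_union_left G X3 d012, relDisc_union_left G X3 h01]
  have key : disc G X2 + 2 * disc G X3 ≤ 2 * disc G X0 + 7 * t := by linarith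
  have goal : 3 * disc G X3 ≤ 2 * disc G X0 + 8 * t := by linarith
  rw [ht] at goal
  linarith
end
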